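/- arXiv:2307.13194 — 3 statements merged into one kernel-verified Lean document; each statement's English description precedes it below -/
import Mathlib

section
/- Let q be a positive integer and let m, n be integers with gcd(mn, q) = 1. Then (i) Σ*_{χ mod q} χ(m) χ̄(n) = Σ_{q = d·r, r | (m−n)} μ(d) φ(r), where Σ* denotes the sum over primitive characters mod q; and (ii) Σ^♭_{χ mod q} χ(m) χ̄(n) = (1/2) [ Σ_{q = d·r, r | (m−n)} μ(d) φ(r) + Σ_{q = d·r, r | (m+n)} μ(d) φ(r) ], where Σ^♭ denotes the sum over primitive even characters mod q. -/
/-!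
A character mod `q` factors through level `d ∣ q` exactly when its conductor divides `d`, so
Möbius inversion over the divisors of `q` gives
`[χ primitive] = ∑_{d ∣ q, χ factors through d} μ(q/d)`.
The characters mod `q` factoring through `d` are the lifts of the characters mod `d`, over which
the classical orthogonality relation sums `χ(m)χ̄(n)` to `φ(d)·[d ∣ m - n]`; this gives (i).
For (ii), `[χ even] = (1 + χ(-1))/2` turns the sum over even primitive characters into half the
sum of (i) for `(m, n)` and for `(-m, n)`.
-/

open scoped Classical

open ArithmeticFunction
open scoped ArithmeticFunction.Moebius

theorem ArithmeticFunction.sum_divisors_ite_dvd_moebius_div {R : Type*} [NonAssocRing R] {q : ℕ}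
    (hq : q ≠ 0) (c : ℕ) :
    ∑ d ∈ q.divisors, (if c ∣ d then (μ (q / d) : R) else 0) = if q = c then 1 else 0 := by
  have inversion := (sum_eq_iff_sum_mul_moebius_eq (R := R)
    (f := fun d ↦ if d = c then 1 else 0) (g := fun d ↦ if c ∣ d then 1 else 0)).mp
    (fun n hn ↦ by simp [Finset.sum_ite_eq', Nat.mem_divisors, hn.ne'])
    q (Nat.pos_of_ne_zero hq)
  rw [Nat.sum_divisorsAntidiagonal' (f := fun x y ↦ (μ x : R) * if c ∣ y then 1 else 0)]
    at inversion
  simpa only [mul_ite, mul_one, mul_zero] using inversion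

namespace DirichletCharacter

theorem sum_mul_starRingEnd_eq {n : ℕ} [NeZero n] {b : ZMod n} (hb : IsUnit b) (a : ZMod n) :
    ∑ χ : DirichletCharacter ℂ n, χ a * starRingEnd ℂ (χ b) =
      if b = a then (n.totient : ℂ) else 0 := by
  obtain ⟨u, rfl⟩ := hb
  simp only [← RCLike.star_def, MulChar.star_apply', MulChar.inv_apply, Ring.inverse_unit,
    ← ZMod.inv_coe_unit]
  simpa only [mul_comm] using sum_char_inv_mul_char_eq ℂ u.isUnit a

theorem ite_isPrimitive_eq_sum_moebius {R S : Type*} [CommMonoidWithZero R] [NonAssocRing S]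
    {q : ℕ} [NeZero q] (χ : DirichletCharacter R q) :
    (if χ.IsPrimitive then 1 else 0 : S) =
      ∑ d ∈ q.divisors, if χ.FactorsThrough d then (μ (q / d) : S) else 0 := by
  rw [Finset.sum_congr rfl fun d hd ↦ if_congr ((mem_conductorSet_iff χ).symm.trans
      (χ.mem_conductorSet_iff_conductor_dvd (Nat.dvd_of_mem_divisors hd))) rfl rfl,
    sum_divisors_ite_dvd_moebius_div (NeZero.ne q)]
  simp only [isPrimitive_def, eq_comm]

theorem sum_ite_factorsThrough {R M : Type*} [CommRing R] [IsDomain R] [AddCommMonoid M]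
    {q d : ℕ} [NeZero q] (hd : d ∣ q) (f : DirichletCharacter R q → M) :
    ∑ χ : DirichletCharacter R q, (if χ.FactorsThrough d then f χ else 0) =
      ∑ ψ : DirichletCharacter R d, f (changeLevel hd ψ) := by
  rw [← Finset.sum_filter]
  refine (Finset.sum_nbij (changeLevel hd) (fun ψ _ ↦ ?_)
    (fun ψ₁ _ ψ₂ _ h ↦ changeLevel_injective hd h) (fun χ hχ ↦ ?_) (fun _ _ ↦ rfl)).symm
  · simpa using changeLevel_factorsThrough ψ hd
  · obtain ⟨_, ψ, hψ⟩ := (Finset.mem_filter.mp hχ).2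
    exact ⟨ψ, Finset.mem_univ _, hψ.symm⟩

theorem sum_ite_and_even {K : Type*} [Field K] [NeZero (2 : K)] {q : ℕ}
    (P : DirichletCharacter K q → Prop) (a : ZMod q) (x : DirichletCharacter K q → K) :
    ∑ χ : DirichletCharacter K q, (if P χ ∧ χ.Even then χ a * x χ else 0) =
      1 / 2 * (∑ χ : DirichletCharacter K q, (if P χ then χ a * x χ else 0) +
        ∑ χ : DirichletCharacter K q, if P χ then χ (-a) * x χ else 0) := by
  rw [← Finset.sum_add_distrib, Finset.mul_sum]
  refine Finset.sum_congr rfl fun χ _ ↦ ?_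
  rcases χ.even_or_odd with h | h <;> by_cases hP : P χ
  · simp [hP, h, h.eval_neg, ← two_mul, inv_mul_cancel_left₀ (two_ne_zero (α := K))]
  · simp [hP]
  · simp [hP, h.not_even, h.eval_neg]
  · simp [hP]

theorem sum_ite_isPrimitive_mul_starRingEnd {q : ℕ} [NeZero q] {m n : ℤ} (hm : IsCoprime m q)
    (hn : IsCoprime n q) :
    ∑ χ : DirichletCharacter ℂ q,
        (if χ.IsPrimitive then χ m * starRingEnd ℂ (χ n) else 0) =
      ∑ r ∈ q.divisors, if (r : ℤ) ∣ m - n then (μ (q / r) : ℂ) * r.totient else 0 := by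
  calc _ = ∑ χ : DirichletCharacter ℂ q, ∑ d ∈ q.divisors, (μ (q / d) : ℂ) *
        (if χ.FactorsThrough d then χ m * starRingEnd ℂ (χ n) else 0) := by
        refine Finset.sum_congr rfl fun χ _ ↦ ?_
        rw [← one_mul (χ m * _), ← ite_zero_mul, ite_isPrimitive_eq_sum_moebius,
          Finset.sum_mul]
        simp only [ite_zero_mul, mul_ite, mul_zero, one_mul]
    _ = ∑ d ∈ q.divisors, (μ (q / d) : ℂ) *
        ∑ ψ : DirichletCharacter ℂ d, ψ m * starRingEnd ℂ (ψ n) := by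
        rw [Finset.sum_comm]
        refine Finset.sum_congr rfl fun d hd ↦ ?_
        rw [← Finset.mul_sum, sum_ite_factorsThrough (Nat.dvd_of_mem_divisors hd)]
        simp only [changeLevel_eq_cast_of_dvd' _ _ hm, changeLevel_eq_cast_of_dvd' _ _ hn]
    _ = _ := by
        refine Finset.sum_congr rfl fun d hd ↦ ?_
        have : NeZero d := ⟨(Nat.pos_of_mem_divisors hd).ne'⟩
        have hdq : (d : ℤ) ∣ q := Int.natCast_dvd_natCast.mpr (Nat.dvd_of_mem_divisors hd)
        rw [sum_mul_starRingEnd_eq ((ZMod.coe_int_isUnit_iff_isCoprime n d).mpr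
          (hn.of_isCoprime_of_dvd_right hdq).symm)]
        simp only [ZMod.intCast_eq_intCast_iff_dvd_sub, mul_ite, mul_zero]

end DirichletCharacter

/-- **Orthogonality relations.** For `(mn, q) = 1`:
(i) the sum of `χ(m)χ̄(n)` over primitive characters mod `q` equals
`∑_{q = dr, r ∣ m-n} μ(d) φ(r)`;
(ii) the sum over primitive even characters equals
`(1/2) ∑_{q = dr, r ∣ m±n} μ(d) φ(r)` (both signs summed). -/
theorem orthogonality_primitive_characters (q : ℕ) (hq : 0 < q) (m n : ℤ)
    (h : Int.gcd (m * n) q = 1) :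
    (∑ χ : DirichletCharacter ℂ q,
        (if χ.IsPrimitive then χ ((m : ZMod q)) * (starRingEnd ℂ) (χ ((n : ZMod q))) else 0)) =
      (∑ r ∈ q.divisors,
        if (r : ℤ) ∣ (m - n) then ((ArithmeticFunction.moebius (q / r) : ℤ) : ℂ) * (r.totient : ℂ)
        else 0) ∧
    (∑ χ : DirichletCharacter ℂ q,
        (if χ.IsPrimitive ∧ χ.Even then χ ((m : ZMod q)) * (starRingEnd ℂ) (χ ((n : ZMod q)))
         else 0)) =
      (1 / 2 : ℂ) *
        ((∑ r ∈ q.divisors,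
            if (r : ℤ) ∣ (m - n) then
              ((ArithmeticFunction.moebius (q / r) : ℤ) : ℂ) * (r.totient : ℂ)
            else 0) +
          (∑ r ∈ q.divisors,
            if (r : ℤ) ∣ (m + n) then
              ((ArithmeticFunction.moebius (q / r) : ℤ) : ℂ) * (r.totient : ℂ)
            else 0)) := by
  have : NeZero q := ⟨hq.ne'⟩
  have hmn : IsCoprime (m * n) q := Int.isCoprime_iff_gcd_eq_one.mpr h
  have hm : IsCoprime m q := hmn.of_mul_left_left
  have hn : IsCoprime n q := hmn.of_mul_left_right
  refine ⟨DirichletCharacter.sum_ite_isPrimitive_mul_starRingEnd hm hn, ?_⟩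
  rw [DirichletCharacter.sum_ite_and_even, ← Int.cast_neg,
    DirichletCharacter.sum_ite_isPrimitive_mul_starRingEnd hm hn,
    DirichletCharacter.sum_ite_isPrimitive_mul_starRingEnd hm.neg_left hn]
  simp only [neg_sub_left, dvd_neg, add_comm n]
end

section
/- Let u, v ∈ ℂ be such that none of u, v−u, 1−v is a non-positive integer. Then Γ(u)Γ(v−u)/Γ(v) + Γ(u)Γ(1−v)/Γ(1+u−v) + Γ(v−u)Γ(1−v)/Γ(1−u) = π^{1/2} · Γ(u/2) Γ((1−v)/2) Γ((v−u)/2) / ( Γ((1−u)/2) Γ(v/2) Γ((1−v+u)/2) ). -/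
/-!
Put `a = u`, `b = v - u`, `c = 1 - v`, so `a + b + c = 1`. By the reflection formula
`1 / Γ(1 - z) = Γ(z) sin(πz) / π`, the left side is
`Γ(a)Γ(b)Γ(c) (sin πa + sin πb + sin πc) / π`.
Reflection combined with Legendre duplication gives
`Γ(x/2) / Γ((1-x)/2) = 2^(1-x) Γ(x) cos(πx/2) / √π`, so the right side is
`4 Γ(a)Γ(b)Γ(c) cos(πa/2) cos(πb/2) cos(πc/2) / π`. The two agree by the triangle identity
`sin x + sin y + sin z = 4 cos(x/2) cos(y/2) cos(z/2)` for `x + y + z = π`.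
-/

open scoped Real

namespace Complex

theorem inv_Gamma_one_sub {z : ℂ} (hz : Gamma z ≠ 0) :
    (Gamma (1 - z))⁻¹ = Gamma z * sin (π * z) / π := by
  have hreflect : Gamma (1 - z) = π / sin (π * z) / Gamma z :=
    eq_div_of_mul_eq hz (by rw [mul_comm, Gamma_mul_Gamma_one_sub])
  rw [hreflect, div_div, inv_div, mul_comm]

theorem Gamma_half_div_Gamma_one_sub_half {x : ℂ} (hx : ∀ n : ℕ, x ≠ -(2 * n + 1)) :
    Gamma (x / 2) / Gamma ((1 - x) / 2) =
      Gamma x * 2 ^ (1 - x) * cos (π * x / 2) * √π / π := by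
  have hne : Gamma ((1 + x) / 2) ≠ 0 :=
    Gamma_ne_zero fun n hn ↦ hx n (by linear_combination 2 * hn)
  have hreflect := inv_Gamma_one_sub hne
  rw [show 1 - (1 + x) / 2 = (1 - x) / 2 by ring,
    show π * ((1 + x) / 2) = π * x / 2 + π / 2 by ring, sin_add_pi_div_two] at hreflect
  have hdouble := Gamma_mul_Gamma_add_half (x / 2)
  rw [show x / 2 + 1 / 2 = (1 + x) / 2 by ring, show 2 * (x / 2) = x by ring] at hdouble
  rw [div_eq_mul_inv, hreflect]
  linear_combination cos (π * x / 2) / π * hdouble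

theorem sin_add_sin_add_sin_of_add_eq_pi {x y z : ℂ} (h : x + y + z = π) :
    sin x + sin y + sin z = 4 * cos (x / 2) * cos (y / 2) * cos (z / 2) := by
  obtain rfl : z = π - x - y := by linear_combination h
  rw [show (π - x - y) / 2 = π / 2 - (x / 2 + y / 2) by ring, cos_pi_div_two_sub,
    show π - x - y = π - (x + y) by ring, sin_pi_sub]
  obtain ⟨A, rfl⟩ : ∃ A, x = 2 * A := ⟨x / 2, by ring⟩
  obtain ⟨B, rfl⟩ : ∃ B, y = 2 * B := ⟨y / 2, by ring⟩
  simp only [mul_div_cancel_left₀ _ (two_ne_zero' ℂ), sin_add, sin_two_mul, cos_two_mul]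
  ring

theorem Gamma_mul_Gamma_div_Gamma_one_sub_sum {a b c : ℂ} (habc : a + b + c = 1)
    (ha : ∀ n : ℕ, a ≠ -n) (hb : ∀ n : ℕ, b ≠ -n) (hc : ∀ n : ℕ, c ≠ -n) :
    Gamma a * Gamma b / Gamma (1 - c) + Gamma a * Gamma c / Gamma (1 - b) +
        Gamma b * Gamma c / Gamma (1 - a) =
      √π * (Gamma (a / 2) * Gamma (c / 2) * Gamma (b / 2)) /
        (Gamma ((1 - a) / 2) * Gamma ((1 - c) / 2) * Gamma ((1 - b) / 2)) := by
  have hodd {x : ℂ} (hx : ∀ n : ℕ, x ≠ -n) (n : ℕ) : x ≠ -(2 * n + 1) := by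
    exact_mod_cast hx (2 * n + 1)
  have htrig := sin_add_sin_add_sin_of_add_eq_pi (x := π * a) (y := π * b) (z := π * c)
    (by linear_combination π * habc)
  have hpow : (2 : ℂ) ^ (1 - a) * 2 ^ (1 - c) * 2 ^ (1 - b) = 4 := by
    rw [← cpow_add _ _ two_ne_zero, ← cpow_add _ _ two_ne_zero,
      show 1 - a + (1 - c) + (1 - b) = (2 : ℕ) by linear_combination -habc]
    norm_num
  have hsqrt : (√π : ℂ) ^ 2 = π := by exact_mod_cast Real.sq_sqrt Real.pi_pos.le
  simp only [div_eq_mul_inv _ (Gamma (1 - _)), inv_Gamma_one_sub (Gamma_ne_zero ha),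
    inv_Gamma_one_sub (Gamma_ne_zero hb), inv_Gamma_one_sub (Gamma_ne_zero hc)]
  rw [mul_div_assoc (√π : ℂ), ← div_mul_div_comm, ← div_mul_div_comm,
    Gamma_half_div_Gamma_one_sub_half (hodd ha), Gamma_half_div_Gamma_one_sub_half (hodd hb),
    Gamma_half_div_Gamma_one_sub_half (hodd hc)]
  field_simp
  set G := Gamma a * Gamma b * Gamma c
  set C := cos (π * a / 2) * cos (π * c / 2) * cos (π * b / 2)
  linear_combination π ^ 2 * G * htrig - (√π : ℂ) ^ 4 * G * C * hpow -
    4 * G * C * ((√π : ℂ) ^ 2 + π) * hsqrt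

end Complex

/-- A Gamma-function identity: if none of `u`, `v-u`, `1-v` is a non-positive integer, then
`Γ(u)Γ(v-u)/Γ(v) + Γ(u)Γ(1-v)/Γ(1+u-v) + Γ(v-u)Γ(1-v)/Γ(1-u)
  = √π Γ(u/2)Γ((1-v)/2)Γ((v-u)/2) / (Γ((1-u)/2)Γ(v/2)Γ((1-v+u)/2))`.
(At poles of `Γ`, Mathlib's `Complex.Gamma` takes the value `0`, so the quotients
implement the entire reciprocal Gamma function.) -/
theorem gamma_sum_identity (u v : ℂ)
    (hu : ∀ n : ℕ, u ≠ -(n : ℂ))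
    (hvu : ∀ n : ℕ, v - u ≠ -(n : ℂ))
    (hv : ∀ n : ℕ, 1 - v ≠ -(n : ℂ)) :
    Complex.Gamma u * Complex.Gamma (v - u) / Complex.Gamma v +
      Complex.Gamma u * Complex.Gamma (1 - v) / Complex.Gamma (1 + u - v) +
      Complex.Gamma (v - u) * Complex.Gamma (1 - v) / Complex.Gamma (1 - u) =
    (Real.sqrt Real.pi : ℂ) *
      (Complex.Gamma (u / 2) * Complex.Gamma ((1 - v) / 2) * Complex.Gamma ((v - u) / 2)) /
      (Complex.Gamma ((1 - u) / 2) * Complex.Gamma (v / 2) *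
        Complex.Gamma ((1 - v + u) / 2)) := by
  have h := Complex.Gamma_mul_Gamma_div_Gamma_one_sub_sum 
    (show u + (v - u) + (1 - v) = 1 by ring) hu hvu hv
  rwa [sub_sub_cancel, show 1 - (v - u) = 1 + u - v by ring,
    show (1 + u - v) / 2 = (1 - v + u) / 2 by ring] at h
end

section
/- There is an absolute constant K such that for every s ∈ ℂ with −1 ≤ Re s ≤ 1/3: |Γ(1/4 − s/2) / Γ(1/4 + s/2)| ≤ K · (|s|+1)^{−Re s}. -/
/-!
`Γ(1/4 - s/2) = Γ(5/4 - s/2) / (1/4 - s/2)`, and the shifted quotient is normalised to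
`Ψ(s) = Γ(5/4 - s/2) / Γ(1/4 + s/2) · (4 - s²)^((s - 1)/2)` (`gammaRatioNormalized`). For
`|Re s| ≤ 1` the power has modulus `≍ (1 + |s|)^(Re s - 1)`: since `4 - s²` is even in `s`, its
argument is `O(1/|Im s|)`. On `Re s = 1` the two Gamma values are complex conjugate, and on
`Re s = -1` they differ by the factor `(1/4 + s̄/2)(5/4 + s̄/2)`, which the power absorbs, so `Ψ` is
bounded on both edges. Inside the strip it grows at most exponentially in `|Im s|` (reflection
formula), so Phragmén–Lindelöf bounds it throughout. Finally `|1/4 - s/2| ≍ 1 + |s|` because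
`Re s` stays away from `1/2`.
-/

open Complex Set Filter Asymptotics
open scoped Real ComplexConjugate

noncomputable section

namespace Complex

lemma norm_sin_le_exp_abs_im (z : ℂ) : ‖sin z‖ ≤ Real.exp |z.im| := by
  have h₁ : ‖exp (-z * I)‖ ≤ Real.exp |z.im| := by
    rw [norm_exp]; gcongr; simpa using le_abs_self z.im
  have h₂ : ‖exp (z * I)‖ ≤ Real.exp |z.im| := by
    rw [norm_exp]; gcongr; simpa using neg_le_abs z.im
  calc ‖sin z‖ = ‖exp (-z * I) - exp (z * I)‖ / 2 := by simp [sin]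
    _ ≤ (‖exp (-z * I)‖ + ‖exp (z * I)‖) / 2 := by gcongr; exact norm_sub_le _ _
    _ ≤ Real.exp |z.im| := by linarith

lemma abs_arg_le_of_re_nonneg {z : ℂ} (hz : 0 ≤ z.re) : |arg z| ≤ π / 2 * (|z.im| / ‖z‖) := by
  have hθ : |arg z| ≤ π / 2 := abs_arg_le_pi_div_two_iff.2 hz
  have hsin : 2 / π * |arg z| ≤ |z.im| / ‖z‖ := by
    calc 2 / π * |arg z| ≤ Real.sin |arg z| := Real.mul_le_sin (abs_nonneg _) hθ
      _ = |z.im| / ‖z‖ := by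
        rw [← Real.abs_sin_eq_sin_abs_of_abs_le_pi (abs_arg_le_pi z), sin_arg, abs_div, abs_norm]
  calc |arg z| = π / 2 * (2 / π * |arg z|) := by field_simp
    _ ≤ π / 2 * (|z.im| / ‖z‖) := by gcongr

lemma norm_Gamma_le_Gamma_re {z : ℂ} (hz : 0 < z.re) : ‖Gamma z‖ ≤ Real.Gamma z.re := by
  rw [Gamma_eq_integral hz, Real.Gamma_eq_integral hz, GammaIntegral]
  refine (MeasureTheory.norm_integral_le_integral_norm _).trans_eq ?_
  refine MeasureTheory.setIntegral_congr_fun measurableSet_Ioi fun x hx => ?_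
  simp [norm_cpow_eq_rpow_re_of_pos hx, Complex.norm_exp]

lemma exists_norm_Gamma_le_of_re_mem_Icc {a b : ℝ} (ha : 0 < a) :
    ∃ M, ∀ z : ℂ, z.re ∈ Icc a b → ‖Gamma z‖ ≤ M := by
  have hcont : ContinuousOn Real.Gamma (Icc a b) := fun x hx =>
    (Real.differentiableAt_Gamma fun m hm => by
      linarith [hx.1, (Nat.cast_nonneg m : (0 : ℝ) ≤ m), hm]).continuousAt.continuousWithinAt
  obtain ⟨M, hM⟩ := isCompact_Icc.exists_bound_of_continuousOn hcont
  exact ⟨M, fun z hz => (norm_Gamma_le_Gamma_re (ha.trans_le hz.1)).trans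
    ((le_abs_self _).trans (hM _ hz))⟩

lemma inv_Gamma_eq_sin_mul_Gamma_one_sub {z : ℂ} (hz : z.re < 1) :
    (Gamma z)⁻¹ = sin (π * z) * Gamma (1 - z) / π := by
  have hΓ : Gamma (1 - z) ≠ 0 := Gamma_ne_zero_of_re_pos (by simpa using hz)
  calc (Gamma z)⁻¹ = Gamma (1 - z) / (Gamma z * Gamma (1 - z)) := by
        rw [div_mul_cancel_right₀ hΓ]
    _ = sin (π * z) * Gamma (1 - z) / π := by
        rw [Gamma_mul_Gamma_one_sub, div_div_eq_mul_div, mul_comm]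

lemma exists_norm_inv_Gamma_le_of_re_mem_Icc {a b : ℝ} (hb : b < 1) :
    ∃ M, ∀ z : ℂ, z.re ∈ Icc a b → ‖(Gamma z)⁻¹‖ ≤ M * Real.exp (π * |z.im|) := by
  obtain ⟨M, hM⟩ := exists_norm_Gamma_le_of_re_mem_Icc (a := 1 - b) (b := 1 - a) (by linarith)
  refine ⟨M / π, fun z hz => ?_⟩
  have hΓ : ‖Gamma (1 - z)‖ ≤ M :=
    hM _ (by simp only [sub_re, one_re]; constructor <;> linarith [hz.1, hz.2])
  have hsin : ‖sin (π * z)‖ ≤ Real.exp (π * |z.im|) := by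
    simpa [abs_mul, abs_of_pos Real.pi_pos] using norm_sin_le_exp_abs_im (π * z)
  rw [inv_Gamma_eq_sin_mul_Gamma_one_sub (hz.2.trans_lt hb), norm_div, norm_mul, norm_real,
    Real.norm_of_nonneg Real.pi_pos.le]
  calc ‖sin (π * z)‖ * ‖Gamma (1 - z)‖ / π ≤ Real.exp (π * |z.im|) * M / π := by gcongr
    _ = M / π * Real.exp (π * |z.im|) := by ring

end Complex

theorem PhragmenLindelof.vertical_strip_of_norm_le_exp {f : ℂ → ℂ} {a b C M A : ℝ} (hab : a < b)
    (hfd : DiffContOnCl ℂ f (re ⁻¹' Ioo a b))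
    (hgrowth : ∀ z ∈ re ⁻¹' Ioo a b, ‖f z‖ ≤ M * Real.exp (A * |z.im|))
    (hle_a : ∀ z : ℂ, z.re = a → ‖f z‖ ≤ C) (hle_b : ∀ z : ℂ, z.re = b → ‖f z‖ ≤ C)
    {z : ℂ} (hza : a ≤ z.re) (hzb : z.re ≤ b) : ‖f z‖ ≤ C := by
  set c := π / (2 * (b - a))
  have hc : 0 < c := by positivity
  refine PhragmenLindelof.vertical_strip hfd ⟨c, ?_, |A| / c, ?_⟩ hle_a hle_b hza hzb
  · exact div_lt_div_of_pos_left Real.pi_pos (by linarith) (by linarith)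
  refine IsBigO.of_bound |M| (eventually_inf_principal.2 (Eventually.of_forall fun w hw => ?_))
  have hexp : A * |w.im| ≤ |A| / c * Real.exp (c * |w.im|) := by
    calc A * |w.im| ≤ |A| / c * (c * |w.im|) := by
          rw [← mul_assoc, div_mul_cancel₀ _ hc.ne']
          exact mul_le_mul_of_nonneg_right (le_abs_self A) (abs_nonneg _)
      _ ≤ |A| / c * Real.exp (c * |w.im|) := by
          gcongr; linarith [Real.add_one_le_exp (c * |w.im|)]
  calc ‖f w‖ ≤ M * Real.exp (A * |w.im|) := hgrowth w hw
    _ ≤ |M| * ‖Real.exp (|A| / c * Real.exp (c * |w.im|))‖ := by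
        rw [Real.norm_of_nonneg (Real.exp_nonneg _)]
        gcongr
        exact le_abs_self M

lemma Real.rpow_le_mul_rpow_of_le_mul_of_le_mul {u v c r : ℝ} (hu : 0 < u) (hv : 0 < v)
    (huv : u ≤ c * v) (hvu : v ≤ c * u) (hr : |r| ≤ 1) : u ^ r ≤ c * v ^ r := by
  have hc₀ : 0 < c := pos_of_mul_pos_left (hu.trans_le huv) hv.le
  have hc : 1 ≤ c := by nlinarith [huv.trans (mul_le_mul_of_nonneg_left hvu hc₀.le)]
  obtain ⟨hr₁, hr₂⟩ := abs_le.1 hr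
  rcases le_total 0 r with h | h
  · calc u ^ r ≤ (c * v) ^ r := by gcongr
      _ = c ^ r * v ^ r := Real.mul_rpow (by linarith) hv.le
      _ ≤ c * v ^ r := by
          gcongr
          simpa using Real.rpow_le_rpow_of_exponent_le hc hr₂
  · calc u ^ r ≤ (v / c) ^ r :=
          Real.rpow_le_rpow_of_nonpos (by positivity)
            (by rwa [div_le_iff₀ (by linarith), mul_comm]) h
      _ = c ^ (-r) * v ^ r := by
          rw [Real.div_rpow hv.le (by linarith), Real.rpow_neg (by linarith)]; ring
      _ ≤ c * v ^ r := by
          gcongr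
          simpa using Real.rpow_le_rpow_of_exponent_le hc (by linarith : -r ≤ 1)

section FourSubSq

variable {z : ℂ}

lemma re_four_sub_sq (z : ℂ) : (4 - z ^ 2).re = 4 - z.re ^ 2 + z.im ^ 2 := by
  simp only [sq, sub_re, re_ofNat, mul_re]; ring

lemma im_four_sub_sq (z : ℂ) : (4 - z ^ 2).im = -(2 * z.re * z.im) := by
  simp only [sq, sub_im, im_ofNat, mul_im, zero_sub]; ring

lemma three_add_sq_im_le_re_four_sub_sq (hz : |z.re| ≤ 1) : 3 + z.im ^ 2 ≤ (4 - z ^ 2).re := by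
  rw [re_four_sub_sq]; nlinarith [sq_abs z.re, abs_nonneg z.re]

lemma norm_four_sub_sq_le (z : ℂ) : ‖4 - z ^ 2‖ ≤ 4 * (1 + ‖z‖) ^ 2 := by
  calc ‖4 - z ^ 2‖ ≤ ‖(4 : ℂ)‖ + ‖z ^ 2‖ := norm_sub_le _ _
    _ = 4 + ‖z‖ ^ 2 := by simp
    _ ≤ 4 * (1 + ‖z‖) ^ 2 := by nlinarith [norm_nonneg z]

lemma sq_one_add_norm_le_norm_four_sub_sq (hz : |z.re| ≤ 1) : (1 + ‖z‖) ^ 2 ≤ 2 * ‖4 - z ^ 2‖ := by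
  have hre : 4 - z.re ^ 2 + z.im ^ 2 ≤ ‖4 - z ^ 2‖ := re_four_sub_sq z ▸ re_le_norm _
  have hnorm : ‖z‖ ^ 2 = z.re ^ 2 + z.im ^ 2 := by rw [Complex.sq_norm, normSq_apply]; ring
  nlinarith [sq_nonneg (1 - ‖z‖), sq_abs z.re, abs_nonneg z.re]

lemma abs_arg_four_sub_sq_mul_le {t : ℝ} (hz : |z.re| ≤ 1) (ht : |t| ≤ |z.im| / 2) :
    |arg (4 - z ^ 2) * t| ≤ 2 := by
  have hre := three_add_sq_im_le_re_four_sub_sq hz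
  have hnorm : 3 + z.im ^ 2 ≤ ‖4 - z ^ 2‖ := hre.trans (re_le_norm _)
  have him : |(4 - z ^ 2).im| ≤ 2 * |z.im| := by
    rw [im_four_sub_sq, abs_neg, abs_mul, abs_mul, abs_two]
    nlinarith [abs_nonneg z.im]
  have harg : |arg (4 - z ^ 2)| ≤ π / 2 * (2 * |z.im| / (3 + z.im ^ 2)) := by
    refine (abs_arg_le_of_re_nonneg (by linarith [sq_nonneg z.im])).trans ?_
    gcongr
  have hfrac : 2 * |z.im| / (3 + z.im ^ 2) * (|z.im| / 2) ≤ 1 := by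
    rw [div_mul_div_comm, div_le_one (by positivity)]
    nlinarith [sq_abs z.im]
  calc |arg (4 - z ^ 2) * t| = |arg (4 - z ^ 2)| * |t| := abs_mul _ _
    _ ≤ π / 2 * (2 * |z.im| / (3 + z.im ^ 2)) * (|z.im| / 2) := by gcongr
    _ ≤ π / 2 * 1 := by rw [mul_assoc]; gcongr
    _ ≤ 2 := by linarith [Real.pi_le_four]

lemma norm_four_sub_sq_cpow_le {w : ℂ} (hz : |z.re| ≤ 1) (hw : |w.re| ≤ 1)
    (hwz : |w.im| ≤ |z.im| / 2) :
    ‖(4 - z ^ 2) ^ w‖ ≤ 4 * Real.exp 2 * (1 + ‖z‖) ^ (2 * w.re) := by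
  have hre : 0 < (4 - z ^ 2).re := by
    linarith [three_add_sq_im_le_re_four_sub_sq hz, sq_nonneg z.im]
  have hu : 0 < ‖4 - z ^ 2‖ := hre.trans_le (re_le_norm _)
  have hpow : ‖4 - z ^ 2‖ ^ w.re ≤ 4 * (1 + ‖z‖) ^ (2 * w.re) := by
    rw [Real.rpow_mul (by positivity), Real.rpow_two]
    exact Real.rpow_le_mul_rpow_of_le_mul_of_le_mul hu (by positivity) (norm_four_sub_sq_le z)
      ((sq_one_add_norm_le_norm_four_sub_sq hz).trans (by linarith)) hw
  have harg : (Real.exp (arg (4 - z ^ 2) * w.im))⁻¹ ≤ Real.exp 2 := by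
    rw [← Real.exp_neg, Real.exp_le_exp]
    linarith [neg_abs_le (arg (4 - z ^ 2) * w.im), abs_arg_four_sub_sq_mul_le hz hwz]
  rw [norm_cpow_of_ne_zero (norm_pos_iff.1 hu), div_eq_mul_inv]
  calc ‖4 - z ^ 2‖ ^ w.re * (Real.exp (arg (4 - z ^ 2) * w.im))⁻¹
      ≤ 4 * (1 + ‖z‖) ^ (2 * w.re) * Real.exp 2 := by gcongr
    _ = 4 * Real.exp 2 * (1 + ‖z‖) ^ (2 * w.re) := by ring

lemma norm_four_sub_sq_cpow_sub_one_div_two_le (hz : |z.re| ≤ 1) :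
    ‖(4 - z ^ 2) ^ ((z - 1) / 2)‖ ≤ 4 * Real.exp 2 * (1 + ‖z‖) ^ (z.re - 1) := by
  have h := norm_four_sub_sq_cpow_le (w := (z - 1) / 2) hz
    (by simp only [div_ofNat_re, sub_re, one_re]; rw [abs_le] at hz ⊢; constructor <;> linarith)
    (by simp [abs_div])
  simpa [div_ofNat_re, mul_div_cancel₀] using h

lemma norm_four_sub_sq_cpow_neg_sub_one_div_two_le (hz : |z.re| ≤ 1) :
    ‖(4 - z ^ 2) ^ (-((z - 1) / 2))‖ ≤ 4 * Real.exp 2 * (1 + ‖z‖) ^ (1 - z.re) := by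
  have h := norm_four_sub_sq_cpow_le (w := -((z - 1) / 2)) hz
    (by simp only [neg_re, div_ofNat_re, sub_re, one_re]; rw [abs_le] at hz ⊢
        constructor <;> linarith)
    (by simp [abs_div])
  convert h using 3
  simp only [neg_re, div_ofNat_re, sub_re, one_re]; ring

end FourSubSq

def gammaRatioNormalized (s : ℂ) : ℂ :=
  Gamma (5 / 4 - s / 2) * (Gamma (1 / 4 + s / 2))⁻¹ * (4 - s ^ 2) ^ ((s - 1) / 2)

section GammaRatioNormalized

variable {z : ℂ}

lemma norm_Gamma_ratio_le_of_re_eq_one (hz : z.re = 1) :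
    ‖Gamma (5 / 4 - z / 2) * (Gamma (1 / 4 + z / 2))⁻¹‖ ≤ 1 := by
  have hconj : 5 / 4 - z / 2 = conj (1 / 4 + z / 2) := by
    apply Complex.ext <;> simp only [conj_re, conj_im, add_re, add_im, sub_re, sub_im,
      div_ofNat_re, div_ofNat_im] <;> norm_num [hz]
  rw [hconj, Gamma_conj, norm_mul, norm_inv, norm_conj]
  exact mul_inv_le_one

lemma norm_Gamma_ratio_le_of_re_eq_neg_one (hz : z.re = -1) :
    ‖Gamma (5 / 4 - z / 2) * (Gamma (1 / 4 + z / 2))⁻¹‖ ≤ (1 + ‖z‖) ^ 2 := by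
  set b := conj (1 / 4 + z / 2)
  have hb : 5 / 4 - z / 2 = b + 1 + 1 := by
    apply Complex.ext <;> simp only [b, conj_re, conj_im, add_re, add_im, sub_re, sub_im,
      div_ofNat_re, div_ofNat_im] <;> norm_num [hz]
  have hb_re : b.re = -1 / 4 := by
    simp only [b, conj_re, add_re, div_ofNat_re]; norm_num [hz]
  have hb₀ : b ≠ 0 := fun h => by norm_num [h] at hb_re
  have hb₁ : b + 1 ≠ 0 := fun h => by
    have := congrArg re h
    norm_num [hb_re] at this
  have hnorm_b : ‖b‖ ≤ 1 / 4 + ‖z‖ / 2 := by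
    rw [norm_conj]
    simpa using norm_add_le (1 / 4 : ℂ) (z / 2)
  have hnorm_b₁ : ‖b + 1‖ ≤ 5 / 4 + ‖z‖ / 2 := by linarith [norm_add_le b 1, norm_one (α := ℂ)]
  have hΓ : ‖Gamma b‖ * ‖Gamma (1 / 4 + z / 2)‖⁻¹ ≤ 1 := by
    rw [Gamma_conj, norm_conj]; exact mul_inv_le_one
  rw [hb, Gamma_add_one _ hb₁, Gamma_add_one _ hb₀, norm_mul, norm_mul, norm_mul, norm_inv,
    mul_assoc, mul_assoc]
  calc ‖b + 1‖ * (‖b‖ * (‖Gamma b‖ * ‖Gamma (1 / 4 + z / 2)‖⁻¹))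
      ≤ (5 / 4 + ‖z‖ / 2) * ((1 / 4 + ‖z‖ / 2) * 1) := by gcongr
    _ ≤ (1 + ‖z‖) ^ 2 := by nlinarith [norm_nonneg z]

lemma norm_gammaRatioNormalized_le_of_re_eq_one (hz : z.re = 1) :
    ‖gammaRatioNormalized z‖ ≤ 4 * Real.exp 2 := by
  have hpow := norm_four_sub_sq_cpow_sub_one_div_two_le (z := z) (by simp [hz])
  rw [hz, sub_self, Real.rpow_zero, mul_one] at hpow
  rw [gammaRatioNormalized, norm_mul]
  calc _ ≤ 1 * (4 * Real.exp 2) :=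
        mul_le_mul (norm_Gamma_ratio_le_of_re_eq_one hz) hpow (norm_nonneg _) zero_le_one
    _ = 4 * Real.exp 2 := one_mul _

lemma norm_gammaRatioNormalized_le_of_re_eq_neg_one (hz : z.re = -1) :
    ‖gammaRatioNormalized z‖ ≤ 4 * Real.exp 2 := by
  have hpos : 0 < 1 + ‖z‖ := by positivity
  have hpow := norm_four_sub_sq_cpow_sub_one_div_two_le (z := z) (by simp [hz])
  rw [hz, show (-1 : ℝ) - 1 = -(2 : ℕ) by norm_num, Real.rpow_neg hpos.le, Real.rpow_natCast]
    at hpow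
  rw [gammaRatioNormalized, norm_mul]
  calc _ ≤ (1 + ‖z‖) ^ 2 * (4 * Real.exp 2 * ((1 + ‖z‖) ^ 2)⁻¹) :=
        mul_le_mul (norm_Gamma_ratio_le_of_re_eq_neg_one hz) hpow (norm_nonneg _) (by positivity)
    _ = 4 * Real.exp 2 := by field_simp

lemma exists_norm_gammaRatioNormalized_le_exp :
    ∃ M, ∀ z ∈ re ⁻¹' Ioo (-1) 1, ‖gammaRatioNormalized z‖ ≤ M * Real.exp (π / 2 * |z.im|) := by
  obtain ⟨M₁, hM₁⟩ := exists_norm_Gamma_le_of_re_mem_Icc (a := 3 / 4) (b := 7 / 4) (by norm_num)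
  obtain ⟨M₂, hM₂⟩ :=
    exists_norm_inv_Gamma_le_of_re_mem_Icc (a := -1 / 4) (b := 3 / 4) (by norm_num)
  refine ⟨M₁ * M₂ * (4 * Real.exp 2), fun z hz => ?_⟩
  obtain ⟨h₁, h₂⟩ : -1 < z.re ∧ z.re < 1 := hz
  have hΓ := hM₁ (5 / 4 - z / 2)
    (by simp only [sub_re, div_ofNat_re]; norm_num; constructor <;> linarith)
  have hΓinv := hM₂ (1 / 4 + z / 2)
    (by simp only [add_re, div_ofNat_re]; norm_num; constructor <;> linarith)
  have hpow := norm_four_sub_sq_cpow_sub_one_div_two_le (abs_le.2 ⟨h₁.le, h₂.le⟩)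
  have hpow_le_one : (1 + ‖z‖) ^ (z.re - 1) ≤ 1 :=
    Real.rpow_le_one_of_one_le_of_nonpos (by linarith [norm_nonneg z]) (by linarith)
  have him : π * |(1 / 4 + z / 2).im| = π / 2 * |z.im| := by simp [abs_div]; ring
  rw [him] at hΓinv
  have hΓratio : ‖Gamma (5 / 4 - z / 2)‖ * ‖(Gamma (1 / 4 + z / 2))⁻¹‖ ≤
      M₁ * (M₂ * Real.exp (π / 2 * |z.im|)) :=
    mul_le_mul hΓ hΓinv (norm_nonneg _) ((norm_nonneg _).trans hΓ)
  rw [gammaRatioNormalized, norm_mul, norm_mul]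
  calc _ ≤ M₁ * (M₂ * Real.exp (π / 2 * |z.im|)) * (4 * Real.exp 2 * 1) :=
        mul_le_mul hΓratio (hpow.trans (by gcongr)) (norm_nonneg _)
          ((by positivity : (0 : ℝ) ≤ _).trans hΓratio)
    _ = M₁ * M₂ * (4 * Real.exp 2) * Real.exp (π / 2 * |z.im|) := by ring

lemma differentiableAt_gammaRatioNormalized (hz : |z.re| ≤ 1) :
    DifferentiableAt ℂ gammaRatioNormalized z := by
  obtain ⟨h₁, h₂⟩ := abs_le.1 hz
  have hΓ : DifferentiableAt ℂ (fun s : ℂ => Gamma (5 / 4 - s / 2)) z := by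
    refine (differentiableAt_Gamma _ fun m hm => ?_).comp z (by fun_prop)
    have := congrArg re hm
    simp only [sub_re, div_ofNat_re, neg_re, natCast_re] at this
    norm_num at this
    linarith [(Nat.cast_nonneg m : (0 : ℝ) ≤ m)]
  have hΓinv : DifferentiableAt ℂ (fun s : ℂ => (Gamma (1 / 4 + s / 2))⁻¹) z :=
    differentiable_one_div_Gamma.differentiableAt.comp z (by fun_prop)
  have hslit : 4 - z ^ 2 ∈ slitPlane :=
    Or.inl (by linarith [three_add_sq_im_le_re_four_sub_sq hz, sq_nonneg z.im])
  exact (hΓ.mul hΓinv).mul ((by fun_prop : DifferentiableAt ℂ (fun s : ℂ => 4 - s ^ 2) z).cpow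
    (by fun_prop) hslit)

lemma diffContOnCl_gammaRatioNormalized :
    DiffContOnCl ℂ gammaRatioNormalized (re ⁻¹' Ioo (-1) 1) := by
  refine DifferentiableOn.diffContOnCl fun z hz => ?_
  rw [closure_preimage_re, closure_Ioo (by norm_num)] at hz
  exact (differentiableAt_gammaRatioNormalized (abs_le.2 hz)).differentiableWithinAt

lemma norm_gammaRatioNormalized_le (h₁ : -1 ≤ z.re) (h₂ : z.re ≤ 1) :
    ‖gammaRatioNormalized z‖ ≤ 4 * Real.exp 2 := by
  obtain ⟨M, hM⟩ := exists_norm_gammaRatioNormalized_le_exp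
  exact PhragmenLindelof.vertical_strip_of_norm_le_exp (by norm_num)
    diffContOnCl_gammaRatioNormalized hM (fun _ => norm_gammaRatioNormalized_le_of_re_eq_neg_one)
    (fun _ => norm_gammaRatioNormalized_le_of_re_eq_one) h₁ h₂

end GammaRatioNormalized

lemma one_add_norm_le_mul_norm_quarter_sub_half {s : ℂ} (hs : s.re ≤ 1 / 3) :
    1 + ‖s‖ ≤ 24 * ‖1 / 4 - s / 2‖ := by
  have hre : 1 / 12 ≤ ‖1 / 4 - s / 2‖ :=
    le_trans (by simp only [sub_re, div_ofNat_re]; norm_num; linarith) (re_le_norm _)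
  have htri : ‖s‖ / 2 - 1 / 4 ≤ ‖1 / 4 - s / 2‖ := by
    simpa [norm_sub_rev] using norm_sub_norm_le (s / 2) (1 / 4)
  rcases le_total ‖s‖ 1 with h | h <;> linarith

lemma Gamma_div_Gamma_eq_gammaRatioNormalized_mul {s : ℂ} (h₁ : -1 ≤ s.re) (h₂ : s.re ≤ 1 / 3) :
    Gamma (1 / 4 - s / 2) / Gamma (1 / 4 + s / 2) =
      gammaRatioNormalized s * (4 - s ^ 2) ^ (-((s - 1) / 2)) / (1 / 4 - s / 2) := by
  have hq : 1 / 4 - s / 2 ≠ 0 := fun h => by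
    have := congrArg re h
    simp only [sub_re, div_ofNat_re] at this
    norm_num at this
    linarith
  have hu : 4 - s ^ 2 ≠ 0 := fun h => by
    have := three_add_sq_im_le_re_four_sub_sq (z := s) (abs_le.2 ⟨h₁, by linarith⟩)
    rw [h, zero_re] at this
    nlinarith [sq_nonneg s.im]
  have hshift : Gamma (5 / 4 - s / 2) = (1 / 4 - s / 2) * Gamma (1 / 4 - s / 2) := by
    rw [← Gamma_add_one _ hq]; ring_nf
  rw [gammaRatioNormalized, hshift, cpow_neg, mul_assoc _ ((4 - s ^ 2) ^ _),
    mul_inv_cancel₀ (cpow_ne_zero_iff.2 (Or.inl hu)), mul_one, mul_assoc,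
    mul_div_cancel_left₀ _ hq, div_eq_mul_inv]

/-- **Stirling-type bound for a Gamma quotient:** there is an absolute constant `K` with
`|Γ(1/4 - s/2)/Γ(1/4 + s/2)| ≤ K (|s|+1)^{-Re s}` whenever `-1 ≤ Re s ≤ 1/3`. -/
theorem gamma_quotient_bound :
    ∃ K : ℝ, ∀ s : ℂ, -1 ≤ s.re → s.re ≤ 1 / 3 →
      ‖Complex.Gamma (1 / 4 - s / 2) / Complex.Gamma (1 / 4 + s / 2)‖ ≤
        K * (‖s‖ + 1) ^ (-s.re) := by
  refine ⟨384 * Real.exp 4, fun s h₁ h₂ => ?_⟩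
  have hs : |s.re| ≤ 1 := abs_le.2 ⟨h₁, by linarith⟩
  have hpos : 0 < 1 + ‖s‖ := by positivity
  have hΨ := norm_gammaRatioNormalized_le h₁ (by linarith)
  have hpow := norm_four_sub_sq_cpow_neg_sub_one_div_two_le hs
  have hden := one_add_norm_le_mul_norm_quarter_sub_half h₂
  have hden_pos : 0 < ‖1 / 4 - s / 2‖ := by linarith
  rw [Gamma_div_Gamma_eq_gammaRatioNormalized_mul h₁ h₂, norm_div, norm_mul,
    div_le_iff₀ hden_pos, add_comm ‖s‖]
  calc ‖gammaRatioNormalized s‖ * ‖(4 - s ^ 2) ^ (-((s - 1) / 2))‖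
      ≤ 4 * Real.exp 2 * (4 * Real.exp 2 * (1 + ‖s‖) ^ (1 - s.re)) := by gcongr
    _ = 16 * Real.exp 4 * (1 + ‖s‖) ^ (-s.re) * (1 + ‖s‖) := by
        rw [sub_eq_neg_add, Real.rpow_add hpos, Real.rpow_one,
          show (4 : ℝ) = 2 + 2 by norm_num, Real.exp_add]
        ring
    _ ≤ 16 * Real.exp 4 * (1 + ‖s‖) ^ (-s.re) * (24 * ‖1 / 4 - s / 2‖) := by gcongr
    _ = 384 * Real.exp 4 * (1 + ‖s‖) ^ (-s.re) * ‖1 / 4 - s / 2‖ := by ring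

end
end
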